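/- arXiv:math/0503325 — 6 statements merged into one kernel-verified Lean document; each statement's English description precedes it below -/
import Mathlib

section
/- The sequence of rational functions g_n converges locally uniformly on ℂ∖K to a holomorphic function g; that is, there exists a function g, holomorphic on ℂ∖K, such that g_n converges to g uniformly on every compact subset of ℂ∖K. -/
open Filter Topology Function

/-!
The prefactor `(z - a₀)/(z - b₀)` has the same shape as the other factors, so `g n` is a partial
product of `∏ (z - βⱼ)/(z - αⱼ) = ∏ (1 + (αⱼ - βⱼ)/(z - αⱼ))` with all poles `αⱼ` in `K`. On a
compact `L ⊆ ℂ ∖ K` at distance `δ > 0` from `K` the `j`-th term is at most `(bⱼ - aⱼ)/δ`, and the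
gap lengths `bⱼ - aⱼ` are summable since the gaps are disjoint subintervals of `[a₀, b₀]`. So the
product converges uniformly on `L`, and its limit is holomorphic as a locally uniform limit of
holomorphic functions.
-/

open MeasureTheory in
theorem summable_length_of_pairwise_disjoint_Ioo {ι : Type*} [Countable ι] {a b : ι → ℝ}
    {c d : ℝ} (hab : ∀ i, a i ≤ b i) (hsub : ∀ i, Set.Ioo (a i) (b i) ⊆ Set.Icc c d)
    (hdisj : Pairwise (Disjoint on fun i => Set.Ioo (a i) (b i))) :
    Summable fun i => b i - a i := by
  have hvol : ∑' i, volume (Set.Ioo (a i) (b i)) ≠ ⊤ := by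
    rw [← measure_iUnion hdisj fun _ => measurableSet_Ioo]
    exact ((measure_mono (Set.iUnion_subset hsub)).trans_lt measure_Icc_lt_top).ne
  refine (ENNReal.summable_toReal hvol).congr fun i => ?_
  rw [Real.volume_Ioo, ENNReal.toReal_ofReal (sub_nonneg.2 (hab i))]

theorem exists_pos_le_dist_of_subset_compl {E : Type*} [PseudoMetricSpace E] {L S : Set E}
    (hL : IsCompact L) (hS : IsClosed S) (hLS : L ⊆ Sᶜ) :
    ∃ δ > 0, ∀ z ∈ L, ∀ w ∈ S, δ ≤ dist z w := by
  obtain ⟨δ, hδ, hsub⟩ := hL.exists_cthickening_subset_open hS.isOpen_compl hLS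
  refine ⟨δ, hδ, fun z hz w hw => le_of_not_gt fun hlt => hsub ?_ hw⟩
  exact Metric.mem_cthickening_of_dist_le w z δ L hz (dist_comm w z ▸ hlt.le)

section ProductOfRatios

variable {α β : ℕ → ℂ}

theorem tendstoUniformlyOn_prod_range_div_sub {L : Set ℂ} {δ : ℝ} (hL : IsCompact L)
    (hδ : 0 < δ) (hsep : ∀ z ∈ L, ∀ j, δ ≤ ‖z - α j‖) (hsum : Summable fun j => ‖α j - β j‖) :
    TendstoUniformlyOn (fun n z => ∏ j ∈ Finset.range n, (z - β j) / (z - α j))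
      (fun z => ∏' j, (z - β j) / (z - α j)) atTop L := by
  have hne : ∀ z ∈ L, ∀ j, z - α j ≠ 0 := fun z hz j h => by
    have := hsep z hz j
    rw [h, norm_zero] at this
    linarith
  have hratio : ∀ z ∈ L, ∀ j, (z - β j) / (z - α j) = 1 + (α j - β j) / (z - α j) := by
    intro z hz j
    field_simp [hne z hz j]
    ring
  have hbound : ∀ᶠ j in atTop, ∀ z ∈ L, ‖(α j - β j) / (z - α j)‖ ≤ ‖α j - β j‖ / δ :=
    Eventually.of_forall fun j z hz => by
      rw [norm_div]
      exact div_le_div_of_nonneg_left (norm_nonneg _) hδ (hsep z hz j)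
  have hcont : ∀ j, ContinuousOn (fun z => (α j - β j) / (z - α j)) L := fun j =>
    continuousOn_const.div (continuousOn_id.sub continuousOn_const) fun z hz => hne z hz j
  refine ((Summable.hasProdUniformlyOn_nat_one_add hL (hsum.div_const δ) hbound
    hcont).tendstoUniformlyOn_finsetRange.congr ?_).congr_right ?_
  · exact Eventually.of_forall fun n z hz => Finset.prod_congr rfl fun j _ => (hratio z hz j).symm
  · exact fun z hz => tprod_congr fun j => (hratio z hz j).symm

theorem tendstoLocallyUniformlyOn_prod_range_div_sub {S : Set ℂ} (hS : IsClosed S)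
    (hα : ∀ j, α j ∈ S) (hsum : Summable fun j => ‖α j - β j‖) :
    TendstoLocallyUniformlyOn (fun n z => ∏ j ∈ Finset.range n, (z - β j) / (z - α j))
      (fun z => ∏' j, (z - β j) / (z - α j)) atTop Sᶜ := by
  rw [tendstoLocallyUniformlyOn_iff_forall_isCompact hS.isOpen_compl]
  intro L hLS hL
  obtain ⟨δ, hδ, hsep⟩ := exists_pos_le_dist_of_subset_compl hL hS hLS
  exact tendstoUniformlyOn_prod_range_div_sub hL hδ
    (fun z hz j => (hsep z hz _ (hα j)).trans_eq (dist_eq_norm _ _)) hsum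

theorem differentiableOn_prod_div_sub {S : Set ℂ} (hα : ∀ j, α j ∈ S) (s : Finset ℕ) :
    DifferentiableOn ℂ (fun z => ∏ j ∈ s, (z - β j) / (z - α j)) Sᶜ :=
  DifferentiableOn.fun_finsetProd fun j _ => (differentiableOn_id.sub_const _).div
    (differentiableOn_id.sub_const _) fun _ hz => sub_ne_zero.2 fun h => hz (h ▸ hα j)

end ProductOfRatios

theorem isCompact_Icc_diff_biUnion_Ioo {ι : Type*} (c d : ℝ) (s : Set ι) (a b : ι → ℝ) :
    IsCompact (Set.Icc c d \ ⋃ i ∈ s, Set.Ioo (a i) (b i)) :=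
  isCompact_Icc.diff (isOpen_biUnion fun _ _ => isOpen_Ioo)

section Gaps

variable {a b : ℕ → ℝ}

theorem summable_gap_length (hj : ∀ j : ℕ, 1 ≤ j → a 0 < a j ∧ a j < b j ∧ b j < b 0)
    (hdisj : ∀ i j : ℕ, 1 ≤ i → 1 ≤ j → i ≠ j →
      Disjoint (Set.Icc (a i) (b i)) (Set.Icc (a j) (b j))) :
    Summable fun j => b j - a j := by
  refine (summable_nat_add_iff 1).mp <| summable_length_of_pairwise_disjoint_Ioo
    (a := fun j => a (j + 1)) (b := fun j => b (j + 1)) (c := a 0) (d := b 0)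
    (fun j => (hj (j + 1) (by omega)).2.1.le) (fun j x hx => ?_) fun i k hik => ?_
  · have := hj (j + 1) (by omega)
    exact ⟨by linarith [hx.1], by linarith [hx.2]⟩
  · exact (hdisj (i + 1) (k + 1) (by omega) (by omega) (by omega)).mono
      Set.Ioo_subset_Icc_self Set.Ioo_subset_Icc_self

theorem left_mem_Icc_diff_biUnion_Ioo (hj : ∀ j : ℕ, 1 ≤ j → a 0 < a j ∧ a j < b j ∧ b j < b 0)
    (hdisj : ∀ i j : ℕ, 1 ≤ i → 1 ≤ j → i ≠ j →
      Disjoint (Set.Icc (a i) (b i)) (Set.Icc (a j) (b j))) {j : ℕ} (hj1 : 1 ≤ j) :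
    a j ∈ Set.Icc (a 0) (b 0) \ ⋃ i ∈ {i : ℕ | 1 ≤ i}, Set.Ioo (a i) (b i) := by
  obtain ⟨h0, hab, hb⟩ := hj j hj1
  refine ⟨⟨h0.le, by linarith⟩, ?_⟩
  simp only [Set.mem_iUnion, Set.mem_ofPred_eq, not_exists]
  intro i hi1 hmem
  rcases eq_or_ne i j with rfl | hij
  · exact lt_irrefl _ hmem.1
  · exact Set.disjoint_left.mp (hdisj i j hi1 hj1 hij) (Set.Ioo_subset_Icc_self hmem)
      ⟨le_rfl, hab.le⟩

theorem right_zero_mem_Icc_diff_biUnion_Ioo (hab0 : a 0 < b 0)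
    (hj : ∀ j : ℕ, 1 ≤ j → a 0 < a j ∧ a j < b j ∧ b j < b 0) :
    b 0 ∈ Set.Icc (a 0) (b 0) \ ⋃ i ∈ {i : ℕ | 1 ≤ i}, Set.Ioo (a i) (b i) := by
  refine ⟨⟨hab0.le, le_rfl⟩, ?_⟩
  simp only [Set.mem_iUnion, Set.mem_ofPred_eq, not_exists]
  exact fun i hi1 hmem => (hj i hi1).2.2.not_gt hmem.2

end Gaps

/-- The sequence of rational functions `g n` converges locally uniformly on
`ℂ ∖ K` (i.e. uniformly on every compact subset of `ℂ ∖ K`) to a function `G` holomorphic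
on `ℂ ∖ K`. -/
theorem graphs_stmt0 (a b : ℕ → ℝ) (hab0 : a 0 < b 0)
    (hj : ∀ j : ℕ, 1 ≤ j → a 0 < a j ∧ a j < b j ∧ b j < b 0)
    (hdisj : ∀ i j : ℕ, 1 ≤ i → 1 ≤ j → i ≠ j →
      Disjoint (Set.Icc (a i) (b i)) (Set.Icc (a j) (b j)))
    (Kr : Set ℝ)
    (hKr : Kr = Set.Icc (a 0) (b 0) \ ⋃ j ∈ {j : ℕ | 1 ≤ j}, Set.Ioo (a j) (b j))
    (K : Set ℂ) (hK : K = (fun x : ℝ => (x : ℂ)) '' Kr)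
    (g : ℕ → ℂ → ℂ)
    (hg : ∀ n z, g n z = ((z - (a 0 : ℂ)) / (z - (b 0 : ℂ))) *
      ∏ j ∈ Finset.Icc 1 n, (z - (b j : ℂ)) / (z - (a j : ℂ))) :
    ∃ G : ℂ → ℂ, DifferentiableOn ℂ G Kᶜ ∧
      ∀ L : Set ℂ, L ⊆ Kᶜ → IsCompact L →
        TendstoUniformlyOn (fun n z => g n z) G atTop L := by
  -- The prefactor is the factor `j = 0` of the product, with the roles of `a 0` and `b 0` swapped.
  set α : ℕ → ℂ := fun j => ((if j = 0 then b 0 else a j : ℝ) : ℂ)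
  set β : ℕ → ℂ := fun j => ((if j = 0 then a 0 else b j : ℝ) : ℂ)
  have hK_closed : IsClosed K :=
    hK ▸ hKr ▸ ((isCompact_Icc_diff_biUnion_Ioo _ _ _ _ _).image
      Complex.continuous_ofReal).isClosed
  have hαK : ∀ j, α j ∈ K := by
    intro j
    rw [hK, hKr]
    rcases eq_or_ne j 0 with rfl | hj0
    · exact ⟨_, right_zero_mem_Icc_diff_biUnion_Ioo hab0 hj, by simp [α]⟩
    · exact ⟨_, left_mem_Icc_diff_biUnion_Ioo hj hdisj (Nat.one_le_iff_ne_zero.2 hj0),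
        by simp [α, hj0]⟩
  have hsum : Summable fun j => ‖α j - β j‖ := by
    refine (summable_gap_length hj hdisj).congr fun j => ?_
    rw [← Complex.ofReal_sub, Complex.norm_real, Real.norm_eq_abs]
    rcases eq_or_ne j 0 with rfl | hj0
    · simp [abs_of_pos (sub_pos.2 hab0)]
    · simp [hj0, abs_of_neg (sub_neg.2 (hj j (Nat.one_le_iff_ne_zero.2 hj0)).2.1)]
  have hg_prod : ∀ n, g n = fun z => ∏ j ∈ Finset.range (n + 1), (z - β j) / (z - α j) := by
    intro n
    funext z
    rw [hg, Finset.prod_range_succ', mul_comm, ← Finset.Ico_add_one_right_eq_Icc,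
      Finset.prod_Ico_eq_prod_range, Nat.add_sub_cancel]
    simp [α, β, add_comm 1]
  have hlim := tendstoLocallyUniformlyOn_prod_range_div_sub hK_closed hαK hsum
  have hunif : ∀ L : Set ℂ, L ⊆ Kᶜ → IsCompact L →
      TendstoUniformlyOn (fun n z => g n z) (fun z => ∏' j, (z - β j) / (z - α j)) atTop L := by
    intro L hLK hL u hu
    have hprod := (tendstoLocallyUniformlyOn_iff_forall_isCompact hK_closed.isOpen_compl).mp hlim
    simpa only [hg_prod] using (tendsto_add_atTop_nat 1).eventually (hprod L hLK hL u hu)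
  refine ⟨_, hlim.differentiableOn (Eventually.of_forall fun n => ?_) hK_closed.isOpen_compl, hunif⟩
  exact differentiableOn_prod_div_sub hαK _
end

section
/- If K has Lebesgue measure zero (equivalently, Σ_{j≥1}(b_j − a_j) = b₀ − a₀), then g_n converges to the constant function 1 uniformly on every compact subset of ℂ not meeting K; in particular the limit function g is identically 1 on ℂ∖K. -/
/-! For real `x > b₀` all factors of `g n x` are positive and
`log ((x - u) / (x - v)) = ∫ t in u..v, (x - t)⁻¹`, so `g n x = exp ∫ t in E n, (x - t)⁻¹` with
`E n = [a₀, b₀] \ ⋃_{1 ≤ j ≤ n} (a j, b j)`. These sets decrease to `K`, a null set, so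
`g n x → 1`. The limit `G` is holomorphic on the connected open set `Kᶜ` and equals `1` on the
ray `(b₀, ∞)`, hence on all of `Kᶜ` by the identity theorem. -/

open Filter Topology MeasureTheory Set Complex

lemma log_sub_sub_log_sub_eq_integral {u v x : ℝ} (huv : u ≤ v) (hvx : v < x) :
    Real.log (x - u) - Real.log (x - v) = ∫ t in Ioo u v, (x - t)⁻¹ := by
  rw [← integral_Ioc_eq_integral_Ioo, ← intervalIntegral.integral_of_le huv,
    intervalIntegral.integral_comp_sub_left (fun s => s⁻¹),
    integral_inv_of_pos (by linarith) (by linarith), Real.log_div (by linarith) (by linarith)]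

lemma ratio_mul_prod_ratio_eq_exp_setIntegral {ι : Type*} {a b : ι → ℝ} {a₀ b₀ x : ℝ}
    {s : Finset ι} (hab₀ : a₀ ≤ b₀) (hs : ∀ j ∈ s, a₀ ≤ a j ∧ a j ≤ b j ∧ b j ≤ b₀)
    (hdisj : (s : Set ι).PairwiseDisjoint fun j => Ioo (a j) (b j)) (hx : b₀ < x) :
    (x - a₀) / (x - b₀) * ∏ j ∈ s, (x - b j) / (x - a j) =
      Real.exp (∫ t in Icc a₀ b₀ \ ⋃ j ∈ s, Ioo (a j) (b j), (x - t)⁻¹) := by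
  have hint : IntegrableOn (fun t => (x - t)⁻¹) (Icc a₀ b₀) :=
    (ContinuousOn.inv₀ (by fun_prop) fun t ht => by linarith [ht.2]).integrableOn_Icc
  have hsub : ∀ j ∈ s, Ioo (a j) (b j) ⊆ Icc a₀ b₀ := fun j hj =>
    Ioo_subset_Icc_self.trans (Icc_subset_Icc (hs j hj).1 (hs j hj).2.2)
  rw [setIntegral_sdiff (s.measurableSet_biUnion fun _ _ => measurableSet_Ioo) hint
      (iUnion₂_subset hsub),
    integral_biUnion_finset _ (fun _ _ => measurableSet_Ioo) hdisj
      fun j hj => hint.mono_set (hsub j hj),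
    integral_Icc_eq_integral_Ioo, ← log_sub_sub_log_sub_eq_integral hab₀ hx,
    ← Finset.sum_congr rfl fun j hj =>
      log_sub_sub_log_sub_eq_integral (hs j hj).2.1 (by linarith [(hs j hj).2.2])]
  have hexp : ∀ {u v}, u ≤ b₀ → v ≤ b₀ →
      Real.exp (Real.log (x - u) - Real.log (x - v)) = (x - u) / (x - v) := fun hu hv => by
    rw [Real.exp_sub, Real.exp_log (by linarith), Real.exp_log (by linarith)]
  rw [sub_eq_add_neg _ (∑ j ∈ s, _), ← Finset.sum_neg_distrib, Real.exp_add, Real.exp_sum,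
    hexp hab₀ le_rfl]
  congr 1
  refine Finset.prod_congr rfl fun j hj => ?_
  rw [neg_sub, hexp (hs j hj).2.2 ((hs j hj).2.1.trans (hs j hj).2.2)]

lemma tendsto_measure_diff_biUnion_Icc_one {α : Type*} [MeasurableSpace α] {μ : Measure α}
    {S : Set α} {U : ℕ → Set α} (hS : MeasurableSet S) (hU : ∀ j, MeasurableSet (U j))
    (hμS : μ S ≠ ⊤) :
    Tendsto (fun n => μ (S \ ⋃ j ∈ Finset.Icc 1 n, U j)) atTop
      (𝓝 (μ (S \ ⋃ j ∈ {j : ℕ | 1 ≤ j}, U j))) := by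
  have hunion : ⋃ j ∈ {j : ℕ | 1 ≤ j}, U j = ⋃ n, ⋃ j ∈ Finset.Icc 1 n, U j := by
    ext t
    simp only [mem_iUnion, mem_ofPred_eq, Finset.mem_Icc, exists_prop]
    exact ⟨fun ⟨j, hj, ht⟩ => ⟨j, j, ⟨hj, le_rfl⟩, ht⟩, fun ⟨_, j, ⟨hj, _⟩, ht⟩ => ⟨j, hj, ht⟩⟩
  rw [hunion, sdiff_iUnion]
  refine tendsto_measure_iInter_atTop
    (fun n => (hS.diff (Finset.measurableSet_biUnion _ fun j _ => hU j)).nullMeasurableSet)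
    (fun m n hmn => sdiff_subset_sdiff_right (biUnion_subset_biUnion_left ?_))
    ⟨0, ne_top_of_le_ne_top hμS (measure_mono sdiff_subset)⟩
  exact fun j hj => Finset.Icc_subset_Icc_right hmn hj

lemma norm_setIntegral_inv_sub_le {E : Set ℝ} {b₀ x : ℝ} (hE : E ⊆ Iic b₀) (hEfin : volume E < ⊤)
    (hx : b₀ < x) :
    ‖∫ t in E, (x - t)⁻¹‖ ≤ (x - b₀)⁻¹ * volume.real E := by
  refine norm_setIntegral_le_of_norm_le_const hEfin fun t ht => ?_
  have htb : t ≤ b₀ := hE ht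
  rw [Real.norm_of_nonneg (inv_nonneg.mpr (by linarith))]
  exact inv_anti₀ (by linarith) (by linarith)

lemma tendsto_ratio_mul_prod_ratio_of_volume_eq_zero {a b : ℕ → ℝ} {a₀ b₀ x : ℝ}
    (hab₀ : a₀ ≤ b₀) (hj : ∀ j, 1 ≤ j → a₀ ≤ a j ∧ a j ≤ b j ∧ b j ≤ b₀)
    (hdisj : {j : ℕ | 1 ≤ j}.PairwiseDisjoint fun j => Ioo (a j) (b j))
    (hvol : volume (Icc a₀ b₀ \ ⋃ j ∈ {j : ℕ | 1 ≤ j}, Ioo (a j) (b j)) = 0) (hx : b₀ < x) :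
    Tendsto (fun n => (x - a₀) / (x - b₀) * ∏ j ∈ Finset.Icc 1 n, (x - b j) / (x - a j))
      atTop (𝓝 1) := by
  set E : ℕ → Set ℝ := fun n => Icc a₀ b₀ \ ⋃ j ∈ Finset.Icc 1 n, Ioo (a j) (b j)
  have hEfin : ∀ n, volume (E n) < ⊤ := fun n =>
    (measure_mono sdiff_subset).trans_lt measure_Icc_lt_top
  have hvolE : Tendsto (fun n => volume.real (E n)) atTop (𝓝 0) := by
    have := tendsto_measure_diff_biUnion_Icc_one (μ := volume) (S := Icc a₀ b₀)
      (U := fun j => Ioo (a j) (b j)) measurableSet_Icc (fun _ => measurableSet_Ioo)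
      measure_Icc_lt_top.ne
    rw [hvol] at this
    exact (ENNReal.tendsto_toReal ENNReal.zero_ne_top).comp this
  have hintE : Tendsto (fun n => ∫ t in E n, (x - t)⁻¹) atTop (𝓝 0) := by
    refine squeeze_zero_norm (fun n => norm_setIntegral_inv_sub_le
      (sdiff_subset.trans Icc_subset_Iic_self) (hEfin n) hx) ?_
    simpa using hvolE.const_mul (x - b₀)⁻¹
  have hexp := (Real.continuous_exp.tendsto 0).comp hintE
  rw [Real.exp_zero] at hexp
  exact hexp.congr fun n => (ratio_mul_prod_ratio_eq_exp_setIntegral hab₀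
    (fun j hjn => hj j (Finset.mem_Icc.mp hjn).1)
    (hdisj.subset fun j hjn => (Finset.mem_Icc.mp hjn).1) hx).symm

lemma isPreconnected_compl_of_subset_ofReal_Iic {K : Set ℂ} {c : ℝ}
    (hK : K ⊆ ofReal '' Iic c) : IsPreconnected Kᶜ := by
  set Ω := (· + (c : ℂ)) '' slitPlane
  have hΩ : IsPreconnected Ω :=
    (starConvex_one_slitPlane.isPathConnected one_mem_slitPlane).isConnected.isPreconnected.image
      _ (by fun_prop)
  have hΩK : Ω ⊆ Kᶜ := by
    rintro _ ⟨w, hw, rfl⟩ hwK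
    obtain ⟨x, hx, hxw⟩ := hK hwK
    have hw' : w = ((x - c : ℝ) : ℂ) := by push_cast; rw [hxw]; ring
    rw [hw', ofReal_mem_slitPlane] at hw
    linarith [mem_Iic.mp hx]
  have hdense : Dense {z : ℂ | z.im ≠ 0} := (dense_compl_singleton 0).preimage isOpenMap_im
  refine hΩ.subset_closure hΩK fun z _ => closure_mono ?_ (hdense z)
  intro z hz
  exact ⟨z - c, Or.inr (by simpa using hz), by ring⟩

lemma eqOn_of_forall_ofReal_Ioi_eq {f h : ℂ → ℂ} {U : Set ℂ} (hf : AnalyticOnNhd ℂ f U)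
    (hh : AnalyticOnNhd ℂ h U) (hU : IsPreconnected U) {c : ℝ}
    (hcU : ∀ x : ℝ, c < x → (x : ℂ) ∈ U) (heq : ∀ x : ℝ, c < x → f x = h x) : EqOn f h U := by
  have hmaps : Tendsto ofReal (𝓝[≠] (c + 1)) (𝓝[≠] ((c + 1 : ℝ) : ℂ)) :=
    continuous_ofReal.continuousWithinAt.tendsto_nhdsWithin
      fun x hx => by simpa only [mem_compl_iff, mem_singleton_iff, ofReal_inj] using hx
  have hright : ∀ᶠ x in 𝓝[≠] (c + 1), c < x :=
    nhdsWithin_le_nhds (Ioi_mem_nhds (by linarith))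
  refine hf.eqOn_of_preconnected_of_frequently_eq hh hU (hcU (c + 1) (by linarith)) ?_
  exact hmaps.frequently (hright.mono fun x hx => heq x hx).frequently

/-- If `K` has Lebesgue measure zero then `g n` converges to the constant
function `1` uniformly on every compact set not meeting `K`; in particular the limit
function `G` is identically `1` on `ℂ ∖ K`. -/
theorem graphs_stmt2 (a b : ℕ → ℝ) (hab0 : a 0 < b 0)
    (hj : ∀ j : ℕ, 1 ≤ j → a 0 < a j ∧ a j < b j ∧ b j < b 0)
    (hdisj : ∀ i j : ℕ, 1 ≤ i → 1 ≤ j → i ≠ j →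
      Disjoint (Set.Icc (a i) (b i)) (Set.Icc (a j) (b j)))
    (Kr : Set ℝ)
    (hKr : Kr = Set.Icc (a 0) (b 0) \ ⋃ j ∈ {j : ℕ | 1 ≤ j}, Set.Ioo (a j) (b j))
    (K : Set ℂ) (hK : K = (fun x : ℝ => (x : ℂ)) '' Kr)
    (g : ℕ → ℂ → ℂ)
    (hg : ∀ n z, g n z = ((z - (a 0 : ℂ)) / (z - (b 0 : ℂ))) *
      ∏ j ∈ Finset.Icc 1 n, (z - (b j : ℂ)) / (z - (a j : ℂ)))
    (G : ℂ → ℂ) (hGd : DifferentiableOn ℂ G Kᶜ)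
    (hGlim : ∀ L : Set ℂ, L ⊆ Kᶜ → IsCompact L →
      TendstoUniformlyOn (fun n z => g n z) G atTop L)
    (hvol : MeasureTheory.volume Kr = 0) :
    (∀ L : Set ℂ, IsCompact L → L ∩ K = ∅ →
      TendstoUniformlyOn (fun n z => g n z) (fun _ => (1 : ℂ)) atTop L) ∧
    Set.EqOn G (fun _ => (1 : ℂ)) Kᶜ := by
  have hKsub : K ⊆ ofReal '' Iic (b 0) :=
    hK ▸ hKr ▸ image_mono (sdiff_subset.trans Icc_subset_Iic_self)
  have hKc : IsCompact K :=
    hK ▸ hKr ▸ (isCompact_Icc.diff (isOpen_biUnion fun _ _ => isOpen_Ioo)).image continuous_ofReal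
  have hmemK : ∀ x : ℝ, b 0 < x → (x : ℂ) ∈ Kᶜ := by
    intro x hx hxK
    obtain ⟨y, hy, hyx⟩ := hKsub hxK
    rw [ofReal_inj] at hyx
    exact (hyx ▸ hx).not_ge hy
  have hG1 : ∀ x : ℝ, b 0 < x → G x = 1 := by
    intro x hx
    have hreal := tendsto_ratio_mul_prod_ratio_of_volume_eq_zero hab0.le
      (fun j hj1 => (hj j hj1).imp le_of_lt fun h => h.imp le_of_lt le_of_lt)
      (fun i hi j hj' hij => (hdisj i j hi hj' hij).mono Ioo_subset_Icc_self Ioo_subset_Icc_self)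
      (hKr ▸ hvol) hx
    refine tendsto_nhds_unique ((hGlim {(x : ℂ)} (singleton_subset_iff.mpr (hmemK x hx))
      isCompact_singleton).tendsto_at rfl) ?_
    have hcplx := (continuous_ofReal.tendsto _).comp hreal
    rw [ofReal_one] at hcplx
    refine hcplx.congr fun n => ?_
    simp only [Function.comp_apply, hg]
    push_cast
    rfl
  have hEq : EqOn G (fun _ => 1) Kᶜ :=
    eqOn_of_forall_ofReal_Ioi_eq (hGd.analyticOnNhd hKc.isClosed.isOpen_compl) analyticOnNhd_const
      (isPreconnected_compl_of_subset_ofReal_Iic hKsub) hmemK hG1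
  refine ⟨fun L hL hLK => ?_, hEq⟩
  have hLsub : L ⊆ Kᶜ := (disjoint_iff_inter_eq_empty.mpr hLK).subset_compl_right
  exact (hGlim L hLsub hL).congr_right fun z hz => hEq (hLsub hz)
end

section
/- Let δ > 0 and set l = Σ_{j=0}^{n}(β_j − α_j). If z ∈ ℂ satisfies |z − β_j| ≥ δ for every 0 ≤ j ≤ n, then |∏_{j=0}^{n}(z−α_j)/(z−β_j) − 1| ≤ exp(l/δ) − 1. -/
open Filter Topology

/-! Writing each factor as `1 + (β j - α j) / (z - β j)`, the perturbations have norm at most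
`(β j - α j) / δ`, and `‖∏ (1 + f j) - 1‖ ≤ exp (∑ ‖f j‖) - 1` for any finite product in a normed
commutative ring. -/

open Finset

lemma sub_div_sub_eq_one_add_div {K : Type*} [Field K] {a b z : K} (h : z - b ≠ 0) :
    (z - a) / (z - b) = 1 + (b - a) / (z - b) := by
  rw [one_add_div h]
  ring

lemma norm_sub_div_sub_le {a b δ : ℝ} {z : ℂ} (hab : a ≤ b) (hδ : 0 < δ)
    (hz : δ ≤ ‖z - b‖) : ‖((b : ℂ) - a) / (z - b)‖ ≤ (b - a) / δ := by
  rw [norm_div, ← Complex.ofReal_sub, Complex.norm_real, Real.norm_of_nonneg (sub_nonneg.2 hab)]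
  exact div_le_div_of_nonneg_left (sub_nonneg.2 hab) hδ hz

/-- If `|z - β j| ≥ δ` for all `0 ≤ j ≤ n`, then
`|∏_{j=0}^{n} (z - α j)/(z - β j) - 1| ≤ exp(l/δ) - 1` where
`l = ∑_{j=0}^{n} (β j - α j)`. -/
theorem graphs_stmt4 (n : ℕ) (α β : ℕ → ℝ) (hab : ∀ j ≤ n, α j < β j)
    (δ : ℝ) (hδ : 0 < δ)
    (l : ℝ) (hl : l = ∑ j ∈ Finset.range (n + 1), (β j - α j))
    (z : ℂ) (hz : ∀ j ≤ n, δ ≤ ‖z - (β j : ℂ)‖) :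
    ‖(∏ j ∈ Finset.range (n + 1), (z - (α j : ℂ)) / (z - (β j : ℂ))) - 1‖
      ≤ Real.exp (l / δ) - 1 := by
  have mem_le {j : ℕ} (hj : j ∈ range (n + 1)) : j ≤ n := Nat.lt_succ_iff.mp (mem_range.mp hj)
  set f : ℕ → ℂ := fun j ↦ ((β j : ℂ) - α j) / (z - β j)
  have hfactor : ∀ j ∈ range (n + 1), (z - (α j : ℂ)) / (z - β j) = 1 + f j := fun j hj ↦
    sub_div_sub_eq_one_add_div <| norm_pos_iff.mp <| hδ.trans_le (hz j (mem_le hj))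
  calc ‖(∏ j ∈ range (n + 1), (z - (α j : ℂ)) / (z - β j)) - 1‖
      = ‖∏ j ∈ range (n + 1), (1 + f j) - 1‖ := by rw [prod_congr rfl hfactor]
    _ ≤ Real.exp (∑ j ∈ range (n + 1), ‖f j‖) - 1 := norm_prod_one_add_sub_one_le _ _
    _ ≤ Real.exp (l / δ) - 1 := by
      rw [hl, sum_div]
      gcongr with j hj
      exact norm_sub_div_sub_le (hab j (mem_le hj)).le hδ (hz j (mem_le hj))
end

section
/- For every compact set L ⊂ ℂ∖K, the n-th roots of the uniform deviations tend to zero: (sup_{z∈L}|g(z) − g_n(z)|)^{1/n} → 0 as n → ∞. -/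
/-!
Write `w j z = (z - b j) / (z - a j)`, so that `g m = g n * ∏_{n < j ≤ m} w j` and
`‖w j z - 1‖ = (b j - a j) / ‖z - a j‖ ≤ (b j - a j) / δ` on `L`, where `δ > 0` is the distance
from `L` to `K` (every `a j` lies in `K`). Since `g n → G` uniformly on `L`, the `g n` are
eventually bounded on `L`, so `‖G - g n‖ ≲ ∑_{j > n} (b j - a j)` there. Because `c k → ∞`,
`b j - a j ≤ r ^ j` eventually for every `r > 0`, hence the tail sums are `O(r ^ n)` for every
`r > 0`, and their `n`-th roots tend to `0`.
-/

open Filter Topology Asymptotics Finset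

lemma tendsto_rpow_one_div_of_isBigO_pow {u : ℕ → ℝ} (hu : ∀ n, 0 ≤ u n)
    (h : ∀ r ∈ Set.Ioo (0 : ℝ) 1, u =O[atTop] (r ^ ·)) :
    Tendsto (fun n : ℕ => u n ^ (1 / (n : ℝ))) atTop (𝓝 0) := by
  refine tendsto_order.2 ⟨fun ε hε => .of_forall fun n => hε.trans_le (Real.rpow_nonneg (hu n) _),
    fun ε hε => ?_⟩
  obtain ⟨s, hs, hs1, hsε⟩ : ∃ s, 0 < s ∧ s < 1 ∧ s < ε :=
    ⟨min ε 1 / 2, by positivity, by linarith [min_le_right ε 1], by linarith [min_le_left ε 1]⟩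
  have hlo : u =o[atTop] (s ^ ·) :=
    (h (s / 2) ⟨by positivity, by linarith⟩).trans_isLittleO
      (isLittleO_pow_pow_of_lt_left (by positivity) (by linarith))
  filter_upwards [hlo.bound one_pos, eventually_ge_atTop 1] with n hn hn1
  have hun : u n ≤ s ^ n := by
    simpa [abs_of_nonneg (hu n), abs_of_nonneg hs.le] using hn
  calc u n ^ (1 / (n : ℝ)) ≤ (s ^ n) ^ (1 / (n : ℝ)) :=
        Real.rpow_le_rpow (hu n) hun (by positivity)
    _ = s := by rw [one_div, Real.pow_rpow_inv_natCast hs.le (by omega)]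
    _ < ε := hsε

lemma eventually_rpow_neg_mul_le_pow {b : ℝ} (hb : 1 < b) {c : ℕ → ℝ}
    (hc : Tendsto c atTop atTop) {r : ℝ} (hr : 0 < r) :
    ∀ᶠ j : ℕ in atTop, b ^ (-(j : ℝ) * c j) ≤ r ^ j := by
  have hbc : Tendsto (fun j => b ^ (-c j)) atTop (𝓝 0) :=
    (tendsto_rpow_atBot_of_base_gt_one b hb).comp (tendsto_neg_atTop_atBot.comp hc)
  filter_upwards [hbc.eventually (ge_mem_nhds hr)] with j hj
  rw [neg_mul, ← mul_neg, mul_comm, Real.rpow_mul (by positivity), Real.rpow_natCast]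
  exact pow_le_pow_left₀ (by positivity) hj j

lemma eventually_sum_Ioc_le {d : ℕ → ℝ} {r : ℝ} (hr0 : 0 ≤ r) (hr1 : r < 1)
    (h : ∀ᶠ j in atTop, d j ≤ r ^ j) :
    ∀ᶠ n in atTop, ∀ m, ∑ j ∈ Ioc n m, d j ≤ r ^ n / (1 - r) := by
  obtain ⟨N, hN⟩ := eventually_atTop.1 h
  filter_upwards [eventually_ge_atTop N] with n hn m
  calc ∑ j ∈ Ioc n m, d j ≤ ∑ j ∈ Ico (n + 1) (m + 1), r ^ j := by
        rw [Ico_add_one_add_one_eq_Ioc]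
        exact sum_le_sum fun j hj => hN j (by linarith [(mem_Ioc.1 hj).1])
    _ ≤ r ^ (n + 1) / (1 - r) := geom_sum_Ico_le_of_lt_one hr0 hr1
    _ ≤ r ^ n / (1 - r) := by
        gcongr ?_ / _
        exact pow_le_pow_of_le_one hr0 hr1.le n.le_succ

lemma norm_sub_le_of_tendsto_mul_prod {R : Type*} [NormedCommRing R] [NormOneClass R]
    {x y : R} {w : ℕ → R} {n : ℕ} {τ : ℝ}
    (h : Tendsto (fun m => y * ∏ j ∈ Ioc n m, w j) atTop (𝓝 x))
    (hτ : ∀ m, ∑ j ∈ Ioc n m, ‖w j - 1‖ ≤ τ) (hτ1 : τ ≤ 1) :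
    ‖x - y‖ ≤ 2 * τ * ‖y‖ := by
  have hτ0 : 0 ≤ τ := by simpa using hτ n
  refine le_of_tendsto ((h.sub_const y).norm) (.of_forall fun m => ?_)
  have hprod : ‖∏ j ∈ Ioc n m, w j - 1‖ ≤ 2 * τ := by
    calc ‖∏ j ∈ Ioc n m, w j - 1‖ = ‖∏ j ∈ Ioc n m, (1 + (w j - 1)) - 1‖ := by simp
      _ ≤ Real.exp (∑ j ∈ Ioc n m, ‖w j - 1‖) - 1 := norm_prod_one_add_sub_one_le _ _
      _ ≤ Real.exp τ - 1 := by gcongr; exact hτ m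
      _ ≤ 2 * τ := by
        simpa [abs_of_nonneg hτ0, abs_of_nonneg (sub_nonneg.2 (Real.one_le_exp hτ0))]
          using Real.abs_exp_sub_one_le (x := τ) (by rwa [abs_of_nonneg hτ0])
  calc ‖y * ∏ j ∈ Ioc n m, w j - y‖ = ‖y * (∏ j ∈ Ioc n m, w j - 1)‖ := by rw [mul_sub, mul_one]
    _ ≤ ‖y‖ * (2 * τ) := (norm_mul_le _ _).trans (by gcongr)
    _ = 2 * τ * ‖y‖ := mul_comm _ _

lemma IsCompact.exists_eventually_forall_norm_le {α ι E : Type*} [TopologicalSpace α]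
    [SeminormedAddCommGroup E] {p : Filter ι} {F : ι → α → E} {f : α → E} {s : Set α}
    (hs : IsCompact s) (hf : ContinuousOn f s) (h : TendstoUniformlyOn F f p s) :
    ∃ M ≥ 0, ∀ᶠ i in p, ∀ x ∈ s, ‖F i x‖ ≤ M := by
  obtain ⟨C, hC⟩ := hs.exists_bound_of_continuousOn hf
  refine ⟨max C 0 + 1, by positivity, ?_⟩
  filter_upwards [Metric.tendstoUniformlyOn_iff.1 h 1 one_pos] with i hi x hx
  calc ‖F i x‖ ≤ ‖f x‖ + dist (f x) (F i x) := by
        rw [dist_comm, dist_eq_norm]; exact norm_le_norm_add_norm_sub' _ _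
    _ ≤ max C 0 + 1 := add_le_add ((hC x hx).trans (le_max_left _ _)) (hi x hx).le

lemma exists_pos_forall_le_dist {α : Type*} [PseudoMetricSpace α] {s t : Set α}
    (hs : IsCompact s) (ht : IsClosed t) (hst : Disjoint s t) :
    ∃ δ > 0, ∀ x ∈ s, ∀ y ∈ t, δ ≤ dist x y := by
  obtain ⟨r, hr, h⟩ := Metric.exists_pos_forall_lt_edist hs ht hst
  refine ⟨r, hr, fun x hx y hy => ?_⟩
  have := h x hx y hy
  rw [edist_nndist, ENNReal.coe_lt_coe] at this
  exact this.le

lemma norm_div_sub_one_le {z : ℂ} {a b δ : ℝ} (hab : a ≤ b) (hδ : 0 < δ) (hz : δ ≤ ‖z - a‖) :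
    ‖(z - b) / (z - a) - 1‖ ≤ (b - a) / δ := by
  have hza : z - a ≠ 0 := norm_pos_iff.1 (hδ.trans_le hz)
  rw [div_sub_one hza, sub_sub_sub_cancel_left, norm_div, norm_sub_rev, ← Complex.ofReal_sub,
    Complex.norm_real, Real.norm_of_nonneg (sub_nonneg.2 hab)]
  exact div_le_div_of_nonneg_left (sub_nonneg.2 hab) hδ hz

lemma norm_sub_le_of_tendsto_prod_ratio {a b : ℕ → ℝ} {f : ℕ → ℂ} {p x z : ℂ} {n : ℕ}
    {δ S : ℝ} (hf : ∀ n, f n = p * ∏ j ∈ Icc 1 n, (z - b j) / (z - a j))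
    (hlim : Tendsto f atTop (𝓝 x)) (hab : ∀ j, 1 ≤ j → a j ≤ b j) (hδ : 0 < δ)
    (hza : ∀ j, 1 ≤ j → δ ≤ ‖z - a j‖) (hS : ∀ m, ∑ j ∈ Ioc n m, (b j - a j) ≤ S)
    (hSδ : S ≤ δ) :
    ‖x - f n‖ ≤ 2 * (S / δ) * ‖f n‖ := by
  have hsplit : ∀ m ≥ n, f m = f n * ∏ j ∈ Ioc n m, (z - b j) / (z - a j) := fun m hm => by
    have hIcc : ∀ k, Icc 1 k = Ioc 0 k := Icc_add_one_left_eq_Ioc 0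
    rw [hf, hf, mul_assoc, hIcc, hIcc, prod_Ioc_consecutive _ (Nat.zero_le n) hm]
  refine norm_sub_le_of_tendsto_mul_prod (n := n) (w := fun j => (z - b j) / (z - a j))
    (hlim.congr' ?_) (fun m => ?_) ((div_le_one hδ).2 hSδ)
  · filter_upwards [eventually_ge_atTop n] with m hm using hsplit m hm
  · calc ∑ j ∈ Ioc n m, ‖(z - b j) / (z - a j) - 1‖ ≤ ∑ j ∈ Ioc n m, (b j - a j) / δ := by
          refine sum_le_sum fun j hj => ?_
          have hj1 : 1 ≤ j := by linarith [(mem_Ioc.1 hj).1]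
          exact norm_div_sub_one_le (hab j hj1) hδ (hza j hj1)
      _ ≤ S / δ := by rw [← sum_div]; gcongr; exact hS m

lemma mem_Icc_diff_iUnion_Ioo_of_pairwise_disjoint {a b : ℕ → ℝ}
    (hj : ∀ j : ℕ, 1 ≤ j → a 0 < a j ∧ a j < b j ∧ b j < b 0)
    (hdisj : ∀ i j : ℕ, 1 ≤ i → 1 ≤ j → i ≠ j →
      Disjoint (Set.Icc (a i) (b i)) (Set.Icc (a j) (b j))) {j : ℕ} (hj1 : 1 ≤ j) :
    a j ∈ Set.Icc (a 0) (b 0) \ ⋃ i ∈ {i : ℕ | 1 ≤ i}, Set.Ioo (a i) (b i) := by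
  obtain ⟨h0j, hjj, hj0⟩ := hj j hj1
  refine ⟨⟨h0j.le, (hjj.trans hj0).le⟩, ?_⟩
  simp only [Set.mem_iUnion, Set.mem_ofPred_eq, not_exists]
  intro i hi1 hai
  obtain rfl | hij := eq_or_ne i j
  · exact lt_irrefl _ hai.1
  · exact Set.disjoint_left.1 (hdisj i j hi1 hj1 hij) (Set.Ioo_subset_Icc_self hai)
      ⟨le_rfl, hjj.le⟩

lemma exists_pos_forall_le_norm_sub_left_endpoint {a b : ℕ → ℝ}
    (hj : ∀ j : ℕ, 1 ≤ j → a 0 < a j ∧ a j < b j ∧ b j < b 0)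
    (hdisj : ∀ i j : ℕ, 1 ≤ i → 1 ≤ j → i ≠ j →
      Disjoint (Set.Icc (a i) (b i)) (Set.Icc (a j) (b j))) {L : Set ℂ} (hL : IsCompact L)
    (hLK : Disjoint L ((↑) '' (Set.Icc (a 0) (b 0) \ ⋃ i ∈ {i : ℕ | 1 ≤ i}, Set.Ioo (a i) (b i)))) :
    ∃ δ > 0, ∀ z ∈ L, ∀ j, 1 ≤ j → δ ≤ ‖z - a j‖ := by
  obtain ⟨δ, hδ, h⟩ := exists_pos_forall_le_dist hL
    (Complex.isometry_ofReal.isClosedEmbedding.isClosedMap _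
      (isClosed_Icc.sdiff (isOpen_biUnion fun _ _ => isOpen_Ioo))) hLK
  refine ⟨δ, hδ, fun z hz j hj1 => ?_⟩
  simpa [dist_eq_norm] using
    h z hz _ (Set.mem_image_of_mem _ (mem_Icc_diff_iUnion_Ioo_of_pairwise_disjoint hj hdisj hj1))

theorem graphs_stmt5_general (a b : ℕ → ℝ)
    (hj : ∀ j : ℕ, 1 ≤ j → a 0 < a j ∧ a j < b j ∧ b j < b 0)
    (hdisj : ∀ i j : ℕ, 1 ≤ i → 1 ≤ j → i ≠ j →
      Disjoint (Set.Icc (a i) (b i)) (Set.Icc (a j) (b j)))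
    (Kr : Set ℝ)
    (hKr : Kr = Set.Icc (a 0) (b 0) \ ⋃ j ∈ {j : ℕ | 1 ≤ j}, Set.Ioo (a j) (b j))
    (K : Set ℂ) (hK : K = (fun x : ℝ => (x : ℂ)) '' Kr)
    (g : ℕ → ℂ → ℂ)
    (hg : ∀ n z, g n z = ((z - (a 0 : ℂ)) / (z - (b 0 : ℂ))) *
      ∏ j ∈ Finset.Icc 1 n, (z - (b j : ℂ)) / (z - (a j : ℂ)))
    (G : ℂ → ℂ) (hGd : DifferentiableOn ℂ G Kᶜ)
    (hGlim : ∀ L : Set ℂ, L ⊆ Kᶜ → IsCompact L →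
      TendstoUniformlyOn (fun n z => g n z) G atTop L)
    (c : ℕ → ℝ)
    (hc_top : Tendsto c atTop atTop)
    (hd : ∀ k : ℕ, 1 ≤ k → b k - a k < (4 : ℝ) ^ (-(k : ℝ) * c k)) :
    ∀ L : Set ℂ, L ⊆ Kᶜ → IsCompact L →
      Tendsto (fun n : ℕ =>
          (⨆ z : L, ‖G z - g n z‖) ^ (1 / (n : ℝ)))
        atTop (𝓝 0) := by
  intro L hL hLc
  obtain ⟨δ, hδ, hδa⟩ := exists_pos_forall_le_norm_sub_left_endpoint hj hdisj hLc
    (by subst hK hKr; exact Set.subset_compl_iff_disjoint_right.1 hL)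
  obtain ⟨M, hM0, hM⟩ :=
    hLc.exists_eventually_forall_norm_le (hGd.continuousOn.mono hL) (hGlim L hL hLc)
  refine tendsto_rpow_one_div_of_isBigO_pow (fun n => Real.iSup_nonneg fun _ => norm_nonneg _)
    fun r hr => ?_
  have htail := eventually_sum_Ioc_le (d := fun j => b j - a j) hr.1.le hr.2 <| by
    filter_upwards [eventually_rpow_neg_mul_le_pow (by norm_num : (1 : ℝ) < 4) hc_top hr.1,
      eventually_ge_atTop 1] with j hj hj1 using (hd j hj1).le.trans hj
  have hsmall : Tendsto (fun n : ℕ => r ^ n / (1 - r)) atTop (𝓝 0) := by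
    simpa using (tendsto_pow_atTop_nhds_zero_of_lt_one hr.1.le hr.2).div_const (1 - r)
  refine IsBigO.of_bound (2 * M / (1 - r) / δ) ?_
  filter_upwards [hM, htail, hsmall.eventually (ge_mem_nhds hδ)] with n hMn htn hsn
  have h1r : 0 < 1 - r := sub_pos.2 hr.2
  rw [Real.norm_of_nonneg (Real.iSup_nonneg fun _ => norm_nonneg _),
    Real.norm_of_nonneg (pow_nonneg hr.1.le n)]
  have hτ0 : 0 ≤ r ^ n / (1 - r) / δ := div_nonneg (div_nonneg (pow_nonneg hr.1.le n) h1r.le) hδ.le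
  refine Real.iSup_le (fun z => ?_)
    (mul_nonneg (div_nonneg (div_nonneg (by positivity) h1r.le) hδ.le) (pow_nonneg hr.1.le n))
  calc ‖G z - g n z‖ ≤ 2 * (r ^ n / (1 - r) / δ) * ‖g n z‖ :=
        norm_sub_le_of_tendsto_prod_ratio (hg · z)
          ((hGlim {z.1} (by simpa using hL z.2) isCompact_singleton).tendsto_at rfl)
          (fun j hj1 => (hj j hj1).2.1.le) hδ (hδa z z.2) htn hsn
    _ ≤ 2 * (r ^ n / (1 - r) / δ) * M := by gcongr; exact hMn z z.2
    _ = 2 * M / (1 - r) / δ * r ^ n := by ring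

/-- Under the additional smallness assumption `b k - a k < 4^{-k c k}`
with `c k → ∞`, for every compact `L ⊆ ℂ ∖ K` the `n`-th roots of the uniform
deviations `sup_{z ∈ L} |G z - g n z|` tend to `0`. -/
theorem graphs_stmt5 (a b : ℕ → ℝ) (hab0 : a 0 < b 0)
    (hj : ∀ j : ℕ, 1 ≤ j → a 0 < a j ∧ a j < b j ∧ b j < b 0)
    (hdisj : ∀ i j : ℕ, 1 ≤ i → 1 ≤ j → i ≠ j →
      Disjoint (Set.Icc (a i) (b i)) (Set.Icc (a j) (b j)))
    (Kr : Set ℝ)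
    (hKr : Kr = Set.Icc (a 0) (b 0) \ ⋃ j ∈ {j : ℕ | 1 ≤ j}, Set.Ioo (a j) (b j))
    (K : Set ℂ) (hK : K = (fun x : ℝ => (x : ℂ)) '' Kr)
    (g : ℕ → ℂ → ℂ)
    (hg : ∀ n z, g n z = ((z - (a 0 : ℂ)) / (z - (b 0 : ℂ))) *
      ∏ j ∈ Finset.Icc 1 n, (z - (b j : ℂ)) / (z - (a j : ℂ)))
    (G : ℂ → ℂ) (hGd : DifferentiableOn ℂ G Kᶜ)
    (hGlim : ∀ L : Set ℂ, L ⊆ Kᶜ → IsCompact L →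
      TendstoUniformlyOn (fun n z => g n z) G atTop L)
    (c : ℕ → ℝ) (hc_pos : ∀ k : ℕ, 1 ≤ k → 0 < c k)
    (hc_top : Tendsto c atTop atTop)
    (hd : ∀ k : ℕ, 1 ≤ k → b k - a k < (4 : ℝ) ^ (-(k : ℝ) * c k)) :
    ∀ L : Set ℂ, L ⊆ Kᶜ → IsCompact L →
      Tendsto (fun n : ℕ =>
          (⨆ z : L, ‖G z - g n z‖) ^ (1 / (n : ℝ)))
        atTop (𝓝 0) :=
  graphs_stmt5_general a b hj hdisj Kr hKr K hK g hg G hGd hGlim c hc_top hd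
end

section
/- Suppose h is not identically zero and h(z₀, w) = 0 for every w ∈ ℂ. Then there exist an integer m ≥ 1 and an entire function h₁ : ℂ² → ℂ such that h(z,w) = (z − z₀)^m · h₁(z,w) for all (z,w) ∈ ℂ², and h₁(z₀, ·) is not identically zero, i.e. there exists w ∈ ℂ with h₁(z₀, w) ≠ 0. -/
/-!
Dividing by `z - z₀` preserves holomorphy in both variables: near any point, the difference
quotient `dslope (h (·, w)) z₀ z` is a Cauchy integral over a circle in the `z`-plane whose
integrand depends holomorphically on `(z, w)`, so it can be differentiated under the integral
sign. Since `h (·, w₁)` is a nonzero entire function for some `w₁`, its order of vanishing at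
`z₀` is finite, and each division lowers that order by one; hence after finitely many divisions
the quotient no longer vanishes identically on the line `{z₀} × ℂ`.
-/

open Filter Topology Set Metric Complex MeasureTheory Interval

section CauchyIntegralWithParameter

variable {E : Type*} [NormedAddCommGroup E] [NormedSpace ℂ E]

theorem hasFDerivAt_sub_inv_smul_snd {f : ℂ → E} {f' : E} {ζ : ℂ} {x : ℂ × ℂ}
    (hf : HasDerivAt f f' x.2) (hx : x.1 ≠ ζ) :
    HasFDerivAt (fun y : ℂ × ℂ => (ζ - y.1)⁻¹ • f y.2)
      ((ζ - x.1)⁻¹ • (ContinuousLinearMap.snd ℂ ℂ ℂ).smulRight f' +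
        ((ζ - x.1) ^ 2)⁻¹ • (ContinuousLinearMap.fst ℂ ℂ ℂ).smulRight (f x.2)) x := by
  have hinv : HasDerivAt (fun z => (ζ - z)⁻¹) ((ζ - x.1) ^ 2)⁻¹ x.1 := by
    simpa using ((hasDerivAt_id x.1).const_sub ζ).fun_inv (sub_ne_zero.2 hx.symm)
  have h₁ : HasFDerivAt (fun y : ℂ × ℂ => (ζ - y.1)⁻¹)
      (((ζ - x.1) ^ 2)⁻¹ • ContinuousLinearMap.fst ℂ ℂ ℂ) x :=
    hinv.comp_hasFDerivAt x hasFDerivAt_fst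
  refine (h₁.smul (hf.hasFDerivAt.comp x hasFDerivAt_snd)).congr_fderiv ?_
  ext <;> simp

theorem norm_smul_smulRight_snd_add_smul_smulRight_fst_le (α β : ℂ) (v w : E) :
    ‖α • (ContinuousLinearMap.snd ℂ ℂ ℂ).smulRight v +
        β • (ContinuousLinearMap.fst ℂ ℂ ℂ).smulRight w‖ ≤ ‖α‖ * ‖v‖ + ‖β‖ * ‖w‖ := by
  refine (norm_add_le _ _).trans (add_le_add ?_ ?_) <;>
  · rw [norm_smul, ContinuousLinearMap.norm_smulRight_apply, ← mul_assoc]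
    gcongr
    first
    | exact mul_le_of_le_one_right (norm_nonneg _) (ContinuousLinearMap.norm_snd_le ℂ ℂ ℂ)
    | exact mul_le_of_le_one_right (norm_nonneg _) (ContinuousLinearMap.norm_fst_le ℂ ℂ ℂ)

theorem norm_deriv_le_of_forall_mem_closedBall_norm_le {f : ℂ → E} (hf : Differentiable ℂ f)
    {b w : ℂ} {ρ C : ℝ} (hC : ∀ z ∈ closedBall b (ρ + 1), ‖f z‖ ≤ C) (hw : dist w b ≤ ρ) :
    ‖deriv f w‖ ≤ C := by
  refine (norm_deriv_le_of_forall_mem_sphere_norm_le one_pos hf.diffContOnCl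
    fun z hz => hC z ?_).trans_eq (div_one C)
  have := dist_triangle z w b
  rw [mem_sphere.1 hz] at this
  exact mem_closedBall.2 (by linarith)

variable (c : ℂ) (R : ℝ) (F : ℂ × ℂ → E)

noncomputable def circleParamIntegrand (x : ℂ × ℂ) (θ : ℝ) : E :=
  deriv (circleMap c R) θ • ((circleMap c R θ - x.1)⁻¹ • F (circleMap c R θ, x.2))

noncomputable def circleParamIntegrandFDeriv (x : ℂ × ℂ) (θ : ℝ) : ℂ × ℂ →L[ℂ] E :=
  deriv (circleMap c R) θ •
    ((circleMap c R θ - x.1)⁻¹ • (ContinuousLinearMap.snd ℂ ℂ ℂ).smulRight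
        (deriv (fun w => F (circleMap c R θ, w)) x.2) +
      ((circleMap c R θ - x.1) ^ 2)⁻¹ • (ContinuousLinearMap.fst ℂ ℂ ℂ).smulRight
        (F (circleMap c R θ, x.2)))

variable {c R F}

theorem hasFDerivAt_circleParamIntegrand {x : ℂ × ℂ} {θ : ℝ}
    (hF : DifferentiableAt ℂ (fun w => F (circleMap c R θ, w)) x.2) (hx : x.1 ≠ circleMap c R θ) :
    HasFDerivAt (circleParamIntegrand c R F · θ) (circleParamIntegrandFDeriv c R F x θ) x :=
  (hasFDerivAt_sub_inv_smul_snd hF.hasDerivAt hx).const_smul _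

theorem norm_circleParamIntegrandFDeriv_le {x : ℂ × ℂ} {θ r C : ℝ} (hr : 0 < r)
    (hx : r ≤ ‖circleMap c R θ - x.1‖) (hF : ‖F (circleMap c R θ, x.2)‖ ≤ C)
    (hF' : ‖deriv (fun w => F (circleMap c R θ, w)) x.2‖ ≤ C) :
    ‖circleParamIntegrandFDeriv c R F x θ‖ ≤ |R| * (r⁻¹ * C + (r ^ 2)⁻¹ * C) := by
  have hinv : ‖(circleMap c R θ - x.1)⁻¹‖ ≤ r⁻¹ := by
    rw [norm_inv]
    exact inv_anti₀ hr hx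
  have hinv2 : ‖((circleMap c R θ - x.1) ^ 2)⁻¹‖ ≤ (r ^ 2)⁻¹ := by
    rw [norm_inv, norm_pow]
    exact inv_anti₀ (by positivity) (pow_le_pow_left₀ hr.le hx 2)
  rw [circleParamIntegrandFDeriv, norm_smul, deriv_circleMap, norm_mul, norm_circleMap_zero,
    norm_I, mul_one]
  gcongr
  refine (norm_smul_smulRight_snd_add_smul_smulRight_fst_le _ _ _ _).trans ?_
  gcongr

theorem aestronglyMeasurable_circleParamIntegrand
    (hFc : Continuous fun p : ℝ × ℂ => F (circleMap c R p.1, p.2)) (x : ℂ × ℂ) (μ : Measure ℝ) :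
    AEStronglyMeasurable (circleParamIntegrand c R F x) μ :=
  (measurable_deriv (circleMap c R)).aestronglyMeasurable.smul
    (((continuous_circleMap c R).measurable.sub_const _).inv.aestronglyMeasurable.smul
      (hFc.comp (continuous_id.prodMk continuous_const)).aestronglyMeasurable)

theorem aestronglyMeasurable_circleParamIntegrandFDeriv [CompleteSpace E]
    (hFc : Continuous fun p : ℝ × ℂ => F (circleMap c R p.1, p.2)) (x : ℂ × ℂ) (μ : Measure ℝ) :
    AEStronglyMeasurable (circleParamIntegrandFDeriv c R F x) μ := by
  have hderiv :
      StronglyMeasurable fun p : ℝ × ℂ => deriv (fun w => F (circleMap c R p.1, w)) p.2 :=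
    stronglyMeasurable_deriv_with_param (f := fun θ w => F (circleMap c R θ, w)) hFc
  have hsub : Measurable fun θ => circleMap c R θ - x.1 :=
    (continuous_circleMap c R).measurable.sub_const _
  have h₁ : AEStronglyMeasurable (fun θ => (ContinuousLinearMap.snd ℂ ℂ ℂ).smulRight
      (deriv (fun w => F (circleMap c R θ, w)) x.2)) μ :=
    (ContinuousLinearMap.smulRightL ℂ (ℂ × ℂ) E _).continuous.comp_aestronglyMeasurable
      (hderiv.comp_measurable (g := fun θ : ℝ => (θ, x.2)) (by fun_prop)).aestronglyMeasurable
  have h₂ : AEStronglyMeasurable (fun θ => (ContinuousLinearMap.fst ℂ ℂ ℂ).smulRight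
      (F (circleMap c R θ, x.2))) μ :=
    (ContinuousLinearMap.smulRightL ℂ (ℂ × ℂ) E _).continuous.comp_aestronglyMeasurable
      (hFc.comp (continuous_id.prodMk continuous_const)).aestronglyMeasurable
  exact (measurable_deriv (circleMap c R)).aestronglyMeasurable.smul
    ((hsub.inv.aestronglyMeasurable.smul h₁).add
      ((hsub.pow_const 2).inv.aestronglyMeasurable.smul h₂))

theorem differentiableOn_circleIntegral_sub_inv_smul_param [CompleteSpace E]
    (hF : ContinuousOn F (sphere c R ×ˢ univ))
    (hF₂ : ∀ ζ ∈ sphere c R, Differentiable ℂ fun w => F (ζ, w)) :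
    DifferentiableOn ℂ (fun x : ℂ × ℂ => ∮ ζ in C(c, R), (ζ - x.1)⁻¹ • F (ζ, x.2))
      (ball c R ×ˢ univ) := by
  rintro ⟨a, b⟩ ⟨ha : dist a c < R, -⟩
  refine DifferentiableAt.differentiableWithinAt ?_
  set r := (R - dist a c) / 2 with hr_def
  have hr : 0 < r := by linarith
  have hsphere : ∀ θ, circleMap c R θ ∈ sphere c R :=
    circleMap_mem_sphere c (dist_nonneg.trans ha.le)
  have hFc : Continuous fun p : ℝ × ℂ => F (circleMap c R p.1, p.2) :=
    hF.comp_continuous (by fun_prop) fun p => ⟨hsphere p.1, trivial⟩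
  -- the radius `r + 1` leaves room for Cauchy's estimate on unit circles around points of the ball
  obtain ⟨C, hC⟩ : ∃ C, ∀ p ∈ sphere c R ×ˢ closedBall b (r + 1), ‖F p‖ ≤ C :=
    ((isCompact_sphere c R).prod (isCompact_closedBall b _)).exists_bound_of_continuousOn
      (hF.mono (prod_mono subset_rfl (subset_univ _)))
  have hdist : ∀ θ, ∀ x ∈ ball (a, b) r, r ≤ ‖circleMap c R θ - x.1‖ := by
    intro θ x hx
    have h₁ : dist x.1 a < r := (le_max_left _ _).trans_lt hx
    have h₂ := dist_triangle x.1 a c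
    have h₃ := dist_triangle (circleMap c R θ) x.1 c
    rw [mem_sphere.1 (hsphere θ)] at h₃
    rw [← dist_eq_norm]
    linarith
  have hne : ∀ θ, ∀ x ∈ ball (a, b) r, x.1 ≠ circleMap c R θ := fun θ x hx h =>
    (hr.trans_le (hdist θ x hx)).ne' (by rw [h, sub_self, norm_zero])
  have hsnd : ∀ x ∈ ball (a, b) r, dist x.2 b ≤ r := fun x hx =>
    ((le_max_right _ _).trans_lt hx).le
  have hbound : ∀ θ, ∀ x ∈ ball (a, b) r,
      ‖circleParamIntegrandFDeriv c R F x θ‖ ≤ |R| * (r⁻¹ * C + (r ^ 2)⁻¹ * C) := by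
    intro θ x hx
    refine norm_circleParamIntegrandFDeriv_le hr (hdist θ x hx)
      (hC _ ⟨hsphere θ, mem_closedBall.2 ((hsnd x hx).trans (by linarith))⟩) ?_
    exact norm_deriv_le_of_forall_mem_closedBall_norm_le (hF₂ _ (hsphere θ))
      (fun w hw => hC _ ⟨hsphere θ, hw⟩) (hsnd x hx)
  have hint : Continuous (circleParamIntegrand c R F (a, b)) := by
    unfold circleParamIntegrand
    simp only [deriv_circleMap]
    exact (by fun_prop : Continuous fun θ => circleMap 0 R θ * I).smul
      ((((continuous_circleMap c R).sub continuous_const).inv₀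
        fun θ => sub_ne_zero.2 (hne θ _ (mem_ball_self hr)).symm).smul
        (hFc.comp (continuous_id.prodMk continuous_const)))
  exact (intervalIntegral.hasFDerivAt_integral_of_dominated_of_fderiv_le (ball_mem_nhds _ hr)
    (.of_forall fun x => aestronglyMeasurable_circleParamIntegrand hFc x _)
    (hint.intervalIntegrable _ _) (aestronglyMeasurable_circleParamIntegrandFDeriv hFc _ _)
    (.of_forall fun θ _ x hx => hbound θ x hx) intervalIntegrable_const
    (.of_forall fun θ _ x hx => hasFDerivAt_circleParamIntegrand
      ((hF₂ _ (hsphere θ)) x.2) (hne θ x hx))).differentiableAt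

end CauchyIntegralWithParameter

theorem differentiable_dslope_fst {E : Type*} [NormedAddCommGroup E] [NormedSpace ℂ E]
    [CompleteSpace E] {u : ℂ × ℂ → E} (hu : Differentiable ℂ u) (c : ℂ) :
    Differentiable ℂ fun x : ℂ × ℂ => dslope (fun z => u (z, x.2)) c x.1 := by
  intro x₀
  set R : ℝ := dist x₀.1 c + 1
  have hR : 0 < R := by positivity
  have hcauchy : ∀ x ∈ ball c R ×ˢ (univ : Set ℂ), dslope (fun z => u (z, x.2)) c x.1 =
      (2 * Real.pi * I : ℂ)⁻¹ •
        ∮ ζ in C(c, R), (ζ - x.1)⁻¹ • slope (fun z => u (z, x.2)) c ζ := by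
    rintro ⟨z, w⟩ ⟨hz, -⟩
    have hd : Differentiable ℂ (dslope (fun z => u (z, w)) c) :=
      differentiableOn_univ.1 ((differentiableOn_dslope univ_mem).2 (by fun_prop))
    rw [circleIntegral.integral_congr hR.le fun ζ hζ => ?_,
      hd.differentiableOn.circleIntegral_sub_inv_smul hz, inv_smul_smul₀ two_pi_I_ne_zero]
    rw [dslope_of_ne _ (ne_of_mem_sphere hζ hR.ne')]
  have hF : ContinuousOn (fun p : ℂ × ℂ => slope (fun z => u (z, p.2)) c p.1)
      (sphere c R ×ˢ univ) := by
    have := hu.continuous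
    simp only [slope_def_module]
    refine ContinuousOn.smul ?_ (by fun_prop)
    exact (continuousOn_fst.sub continuousOn_const).inv₀ fun p hp =>
      sub_ne_zero.2 (ne_of_mem_sphere hp.1 hR.ne')
  have hF₂ : ∀ ζ ∈ sphere c R, Differentiable ℂ fun w => slope (fun z => u (z, w)) c ζ := by
    intro ζ _
    simp only [slope_def_module]
    fun_prop
  have hx₀ : ball c R ×ˢ univ ∈ 𝓝 x₀ :=
    (isOpen_ball.prod isOpen_univ).mem_nhds ⟨mem_ball.2 (lt_add_one _), trivial⟩
  exact (((differentiableOn_circleIntegral_sub_inv_smul_param hF hF₂).const_smul _)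
    |>.differentiableAt hx₀).congr_of_eventuallyEq (eventually_of_mem hx₀ hcauchy)

theorem exists_pow_mul_of_analyticOrderAt_eq {z₀ w₁ : ℂ} (n : ℕ) {u : ℂ × ℂ → ℂ}
    (hu : Differentiable ℂ u) (hline : ∀ w, u (z₀, w) = 0)
    (hord : analyticOrderAt (fun z => u (z, w₁)) z₀ = n) :
    ∃ m : ℕ, 1 ≤ m ∧ ∃ u₁ : ℂ × ℂ → ℂ, Differentiable ℂ u₁ ∧
      (∀ z w, u (z, w) = (z - z₀) ^ m * u₁ (z, w)) ∧ ∃ w, u₁ (z₀, w) ≠ 0 := by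
  induction n generalizing u with
  | zero =>
    have hslice : AnalyticAt ℂ (fun z => u (z, w₁)) z₀ :=
      (by fun_prop : Differentiable ℂ _).analyticAt z₀
    exact absurd (hline w₁) (hslice.analyticOrderAt_eq_zero.1 hord)
  | succ n ih =>
    set g := fun x : ℂ × ℂ => dslope (fun z => u (z, x.2)) z₀ x.1
    have hg : Differentiable ℂ g := differentiable_dslope_fst hu z₀
    have hfac : ∀ z w, u (z, w) = (z - z₀) * g (z, w) := fun z w => by
      simpa [hline] using (sub_smul_dslope (fun z => u (z, w)) z₀ z).symm
    by_cases hg₀ : ∃ w, g (z₀, w) ≠ 0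
    · exact ⟨1, le_rfl, g, hg, by simpa using hfac, hg₀⟩
    push Not at hg₀
    have hordg : analyticOrderAt (fun z => g (z, w₁)) z₀ = n := by
      have hslice : AnalyticAt ℂ (fun z => g (z, w₁)) z₀ :=
        (by fun_prop : Differentiable ℂ _).analyticAt z₀
      have hsplit : (fun z => u (z, w₁)) = (· - z₀) * fun z => g (z, w₁) :=
        funext fun z => hfac z w₁
      rw [hsplit, analyticOrderAt_mul (by fun_prop) hslice, analyticOrderAt_id_sub_const_self,
        Nat.cast_succ, add_comm] at hord
      exact WithTop.add_right_cancel ENat.one_ne_top hord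
    obtain ⟨m, hm, u₁, hu₁, hfac₁, hw⟩ := ih hg hg₀ hordg
    refine ⟨m + 1, by omega, u₁, hu₁, fun z w => ?_, hw⟩
    rw [hfac, hfac₁, ← mul_assoc, ← pow_succ']

/-- If an entire function `h` on `ℂ²` is not identically zero and vanishes
on the whole vertical line `{z₀} × ℂ`, then `h(z,w) = (z - z₀)^m · h₁(z,w)` for some
`m ≥ 1` and some entire `h₁` with `h₁(z₀, ·)` not identically zero. -/
theorem graphs_stmt6 (h : ℂ × ℂ → ℂ) (hh : Differentiable ℂ h) (z₀ : ℂ)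
    (hne : ∃ p : ℂ × ℂ, h p ≠ 0)
    (hline : ∀ w : ℂ, h (z₀, w) = 0) :
    ∃ m : ℕ, 1 ≤ m ∧ ∃ h₁ : ℂ × ℂ → ℂ, Differentiable ℂ h₁ ∧
      (∀ z w : ℂ, h (z, w) = (z - z₀) ^ m * h₁ (z, w)) ∧
      ∃ w : ℂ, h₁ (z₀, w) ≠ 0 := by
  obtain ⟨⟨z₁, w₁⟩, hz₁⟩ := hne
  have hslice : Differentiable ℂ fun z => h (z, w₁) := by fun_prop
  have hord : analyticOrderAt (fun z => h (z, w₁)) z₀ ≠ ⊤ := by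
    rw [Ne, AnalyticOnNhd.analyticOrderAt_eq_top_iff_eq_zero z₀ hslice.analyticAt]
    exact fun h₀ => hz₁ (congrFun h₀ z₁)
  obtain ⟨n, hn⟩ := ENat.ne_top_iff_exists.1 hord
  exact exists_pow_mul_of_analyticOrderAt_eq n hh hline hn.symm
end

section
/- There exists a holomorphic function f on ℂ∖K such that f(z)² = g(z) for all z ∈ ℂ∖K and f(z) → 1 as |z| → ∞. -/
/-!
Off the real axis `exp (∫ t in p..q, (z - t)⁻¹) = (z - p) / (z - q)`, so `g_n z` is the
exponential of `∫ (z - t)⁻¹` over `[a₀, b₀]` minus the first `n` gaps, and by countable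
additivity `g z = exp (C z)`, where `C z = ∫ t in K, (z - t)⁻¹` is the Cauchy transform of
Lebesgue measure on `K`. Since `C` is holomorphic off `K` and tends to `0` at infinity,
`f = exp (C / 2)` works; `f ^ 2 = g` extends from the nonreal points to all of `ℂ ∖ K` by
continuity.
-/

open Filter Topology Complex MeasureTheory Set Function

noncomputable def cauchyTransform (S : Set ℝ) (z : ℂ) : ℂ := ∫ t in S, (z - t)⁻¹

lemma sub_ofReal_ne_zero {z : ℂ} (hz : z.im ≠ 0) (t : ℝ) : z - t ≠ 0 := fun h => hz (by
  simpa using congrArg im h)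

lemma continuous_inv_sub_ofReal {z : ℂ} (hz : z.im ≠ 0) :
    Continuous fun t : ℝ => (z - t)⁻¹ :=
  (continuous_const.sub continuous_ofReal).inv₀ (sub_ofReal_ne_zero hz)

lemma integral_inv_sub_ofReal {z : ℂ} (hz : z.im ≠ 0) (p q : ℝ) :
    ∫ t in p..q, (z - t)⁻¹ = log (z - p) - log (z - q) := by
  have hderiv : ∀ t : ℝ, HasDerivAt (fun s : ℝ => -log (z - s)) (z - t)⁻¹ t := by
    intro t
    have hsub : HasDerivAt (fun s : ℝ => z - s) (-1) t := by
      simpa using ((hasDerivAt_id t).ofReal_comp).const_sub z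
    exact (hsub.clog_real (mem_slitPlane_iff.2 (Or.inr (by simpa using hz)))).fun_neg.congr_deriv
      (by rw [neg_div, neg_neg, one_div])
  rw [intervalIntegral.integral_eq_sub_of_hasDerivAt (fun t _ => hderiv t)
    ((continuous_inv_sub_ofReal hz).intervalIntegrable p q)]
  ring

lemma exp_cauchyTransform_Ioo {z : ℂ} (hz : z.im ≠ 0) {p q : ℝ} (hpq : p ≤ q) :
    exp (cauchyTransform (Ioo p q) z) = (z - p) / (z - q) := by
  rw [cauchyTransform, ← integral_Ioc_eq_integral_Ioo, ← intervalIntegral.integral_of_le hpq,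
    integral_inv_sub_ofReal hz, exp_sub, exp_log (sub_ofReal_ne_zero hz p),
    exp_log (sub_ofReal_ne_zero hz q)]

lemma differentiableOn_cauchyTransform {S : Set ℝ} (hS : IsCompact S) :
    DifferentiableOn ℂ (cauchyTransform S) (ofReal '' S)ᶜ := by
  intro z₀ hz₀
  obtain ⟨r, hr, hball⟩ :=
    Metric.isOpen_iff.1 (hS.image continuous_ofReal).isClosed.isOpen_compl z₀ hz₀
  have hfar : ∀ z ∈ Metric.ball z₀ (r / 2), ∀ t ∈ S, r / 2 ≤ ‖z - t‖ := by
    intro z hz t ht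
    have ht_far : r ≤ dist (t : ℂ) z₀ := not_lt.1 fun h => hball h ⟨t, ht, rfl⟩
    rw [← dist_eq_norm, dist_comm]
    linarith [dist_triangle (t : ℂ) z z₀, Metric.mem_ball.1 hz]
  have hne : ∀ z ∈ Metric.ball z₀ (r / 2), ∀ t ∈ S, z - t ≠ 0 := fun z hz t ht =>
    norm_pos_iff.1 ((half_pos hr).trans_le (hfar z hz t ht))
  have hS_ae := ae_restrict_mem (μ := volume) hS.isClosed.measurableSet
  have hint : IntegrableOn (fun t : ℝ => (z₀ - t)⁻¹) S :=
    ((continuous_const.sub continuous_ofReal).continuousOn.inv₀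
      (hne z₀ (Metric.mem_ball_self (half_pos hr)))).integrableOn_compact hS
  have hbound : ∀ᵐ (t : ℝ) ∂volume.restrict S, ∀ z ∈ Metric.ball z₀ (r / 2),
      ‖-1 / (z - t) ^ 2‖ ≤ ((r / 2) ^ 2)⁻¹ := by
    filter_upwards [hS_ae] with t ht z hz
    rw [norm_div, norm_neg, norm_one, norm_pow, one_div]
    gcongr
    exact hfar z hz t ht
  have hderiv : ∀ᵐ (t : ℝ) ∂volume.restrict S, ∀ z ∈ Metric.ball z₀ (r / 2),
      HasDerivAt (fun w : ℂ => (w - t)⁻¹) (-1 / (z - t) ^ 2) z := by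
    filter_upwards [hS_ae] with t ht z hz
    exact ((hasDerivAt_id' z).sub_const (t : ℂ)).inv (hne z hz t ht)
  exact (hasDerivAt_integral_of_dominated_loc_of_deriv_le
    (F := fun (z : ℂ) (t : ℝ) => (z - t)⁻¹) (Metric.ball_mem_nhds z₀ (half_pos hr))
    (.of_forall fun z => by fun_prop) hint (Measurable.aestronglyMeasurable (by fun_prop)) hbound
    (continuousOn_const.integrableOn_compact hS) hderiv).2.differentiableAt.differentiableWithinAt

lemma tendsto_cauchyTransform_cobounded {S : Set ℝ} (hS : Bornology.IsBounded S) :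
    Tendsto (cauchyTransform S) (Bornology.cobounded ℂ) (𝓝 0) := by
  obtain ⟨R, hR, hSR⟩ := hS.subset_closedBall_lt 0 0
  have hbound : ∀ᶠ z in Bornology.cobounded ℂ,
      ‖cauchyTransform S z‖ ≤ 2 * ‖z‖⁻¹ * volume.real S := by
    filter_upwards [tendsto_norm_cobounded_atTop.eventually_ge_atTop (2 * R)] with z hz
    refine norm_setIntegral_le_of_norm_le_const hS.measure_lt_top fun t ht => ?_
    have htR : ‖(t : ℂ)‖ ≤ R := by simpa using hSR ht
    have hzt : ‖z‖ / 2 ≤ ‖z - t‖ := by linarith [norm_sub_norm_le z (t : ℂ)]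
    have hz0 : 0 < ‖z‖ := by linarith
    rw [norm_inv, ← div_eq_mul_inv, ← one_div]
    exact (one_div_le (by linarith) (by positivity)).2 (by rwa [one_div_div])
  refine squeeze_zero_norm' hbound ?_
  simpa using ((tendsto_norm_cobounded_atTop.inv_tendsto_atTop).const_mul 2).mul_const
    (volume.real S)

lemma hasSum_cauchyTransform_iUnion {z : ℂ} (hz : z.im ≠ 0) {s : ℕ → Set ℝ}
    (hs : ∀ i, MeasurableSet (s i)) (hdisj : Pairwise (Disjoint on s))
    (hbdd : Bornology.IsBounded (⋃ i, s i)) :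
    HasSum (fun i => cauchyTransform (s i) z) (cauchyTransform (⋃ i, s i) z) :=
  hasSum_integral_iUnion hs hdisj <|
    ((continuous_inv_sub_ofReal hz).continuousOn.integrableOn_compact
      hbdd.isCompact_closure).mono_set subset_closure

lemma Set.EqOn.of_im_ne_zero {Y : Type*} [TopologicalSpace Y] [T2Space Y] {U : Set ℂ}
    (hU : IsOpen U) {f g : ℂ → Y} (hf : ContinuousOn f U) (hg : ContinuousOn g U)
    (h : ∀ z ∈ U, z.im ≠ 0 → f z = g z) : EqOn f g U :=
  EqOn.of_subset_closure (fun z hz => h z hz.1 hz.2) hf hg inter_subset_left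
    (((dense_compl_singleton 0).preimage isOpenMap_im).open_subset_closure_inter hU)

lemma tendsto_prod_div_sub_exp_cauchyTransform {z : ℂ} (hz : z.im ≠ 0) {p q : ℝ}
    (hpq : p ≤ q) {a b : ℕ → ℝ} (hab : ∀ i, a i ≤ b i)
    (hsub : ∀ i, Ioo (a i) (b i) ⊆ Icc p q)
    (hdisj : Pairwise (Disjoint on fun i => Ioo (a i) (b i))) :
    Tendsto (fun n => (z - p) / (z - q) * ∏ i ∈ Finset.range n, (z - b i) / (z - a i)) atTop
      (𝓝 (exp (cauchyTransform (Icc p q \ ⋃ i, Ioo (a i) (b i)) z))) := by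
  set U := ⋃ i, Ioo (a i) (b i)
  have hU : U ⊆ Icc p q := iUnion_subset hsub
  have hint := (continuous_inv_sub_ofReal hz).integrableOn_Icc (μ := volume) (a := p) (b := q)
  have hsplit : cauchyTransform (Icc p q \ U) z =
      cauchyTransform (Icc p q) z - cauchyTransform U z := by
    have := setIntegral_union disjoint_sdiff_left (MeasurableSet.iUnion fun i => measurableSet_Ioo)
      (hint.mono_set sdiff_subset) (hint.mono_set hU)
    rw [sdiff_union_of_subset hU] at this
    exact eq_sub_of_add_eq this.symm
  have hIcc : cauchyTransform (Icc p q) z = cauchyTransform (Ioo p q) z :=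
    integral_Icc_eq_integral_Ioo
  have hprod : ∀ n, (z - p) / (z - q) * ∏ i ∈ Finset.range n, (z - b i) / (z - a i) =
      exp (cauchyTransform (Icc p q) z -
        ∑ i ∈ Finset.range n, cauchyTransform (Ioo (a i) (b i)) z) := by
    intro n
    rw [exp_sub, exp_sum, hIcc, exp_cauchyTransform_Ioo hz hpq, div_eq_mul_inv (_ / _),
      ← Finset.prod_inv_distrib]
    congr 1
    refine Finset.prod_congr rfl fun i _ => ?_
    rw [exp_cauchyTransform_Ioo hz (hab i), inv_div]
  have hsum := (hasSum_cauchyTransform_iUnion hz (fun i => measurableSet_Ioo) hdisj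
    ((Metric.isBounded_Icc p q).subset hU)).tendsto_sum_nat
  simp only [hprod, hsplit]
  exact (tendsto_const_nhds.sub hsum).cexp

lemma Finset.prod_Icc_one_eq_prod_range_succ {M : Type*} [CommMonoid M] (f : ℕ → M) (n : ℕ) :
    ∏ j ∈ Icc 1 n, f j = ∏ i ∈ range n, f (i + 1) := by
  rw [range_eq_Ico, prod_Ico_add' f, zero_add, Ico_add_one_right_eq_Icc]

/-- There exists a holomorphic function `f` on `ℂ ∖ K` with `f² = g` on
`ℂ ∖ K` and `f(z) → 1` as `|z| → ∞`. -/
theorem graphs_stmt9 (a b : ℕ → ℝ) (hab0 : a 0 < b 0)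
    (hj : ∀ j : ℕ, 1 ≤ j → a 0 < a j ∧ a j < b j ∧ b j < b 0)
    (hdisj : ∀ i j : ℕ, 1 ≤ i → 1 ≤ j → i ≠ j →
      Disjoint (Set.Icc (a i) (b i)) (Set.Icc (a j) (b j)))
    (Kr : Set ℝ)
    (hKr : Kr = Set.Icc (a 0) (b 0) \ ⋃ j ∈ {j : ℕ | 1 ≤ j}, Set.Ioo (a j) (b j))
    (K : Set ℂ) (hK : K = (fun x : ℝ => (x : ℂ)) '' Kr)
    (g : ℕ → ℂ → ℂ)
    (hg : ∀ n z, g n z = ((z - (a 0 : ℂ)) / (z - (b 0 : ℂ))) *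
      ∏ j ∈ Finset.Icc 1 n, (z - (b j : ℂ)) / (z - (a j : ℂ)))
    (G : ℂ → ℂ) (hGd : DifferentiableOn ℂ G Kᶜ)
    (hGlim : ∀ L : Set ℂ, L ⊆ Kᶜ → IsCompact L →
      TendstoUniformlyOn (fun n z => g n z) G atTop L) :
    ∃ f : ℂ → ℂ, DifferentiableOn ℂ f Kᶜ ∧ (∀ z ∈ Kᶜ, f z ^ 2 = G z) ∧
      Tendsto f (Bornology.cobounded ℂ) (𝓝 1) := by
  have hU : ⋃ j ∈ {j : ℕ | 1 ≤ j}, Ioo (a j) (b j) = ⋃ i, Ioo (a (i + 1)) (b (i + 1)) :=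
    iUnion_ge_eq_iUnion_nat_add _ 1
  rw [hU] at hKr
  have hj' : ∀ i, a 0 < a (i + 1) ∧ a (i + 1) < b (i + 1) ∧ b (i + 1) < b 0 :=
    fun i => hj (i + 1) le_add_self
  have hgap_sub : ∀ i, Ioo (a (i + 1)) (b (i + 1)) ⊆ Icc (a 0) (b 0) := fun i =>
    Ioo_subset_Icc_self.trans (Icc_subset_Icc (hj' i).1.le (hj' i).2.2.le)
  have hgap_disj : Pairwise (Disjoint on fun i => Ioo (a (i + 1)) (b (i + 1))) := fun i i' h =>
    (hdisj (i + 1) (i' + 1) le_add_self le_add_self (by simpa using h)).mono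
      Ioo_subset_Icc_self Ioo_subset_Icc_self
  have hKr_compact : IsCompact Kr := hKr ▸ isCompact_Icc.diff (isOpen_iUnion fun _ => isOpen_Ioo)
  subst hK
  have hdiff := differentiableOn_cauchyTransform hKr_compact
  have hG_im : ∀ z, z.im ≠ 0 → G z = exp (cauchyTransform Kr z) := by
    intro z hz
    have hzK : z ∉ ofReal '' Kr := fun ⟨t, _, ht⟩ => hz (by simp [← ht])
    have hlim := tendsto_prod_div_sub_exp_cauchyTransform hz hab0.le
      (fun i => (hj' i).2.1.le) hgap_sub hgap_disj
    rw [← hKr] at hlim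
    refine tendsto_nhds_unique ((hGlim {z} (singleton_subset_iff.2 hzK)
      isCompact_singleton).tendsto_at rfl) ?_
    simpa only [hg, Finset.prod_Icc_one_eq_prod_range_succ] using hlim
  have hG : EqOn G (fun z => exp (cauchyTransform Kr z)) (ofReal '' Kr)ᶜ :=
    EqOn.of_im_ne_zero (hKr_compact.image continuous_ofReal).isClosed.isOpen_compl
      hGd.continuousOn hdiff.cexp.continuousOn fun z _ hz => hG_im z hz
  refine ⟨fun z => exp (cauchyTransform Kr z / 2), (hdiff.div_const 2).cexp, fun z hz => ?_, ?_⟩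
  · rw [sq, ← exp_add, add_halves, hG hz]
  · simpa using ((tendsto_cauchyTransform_cobounded hKr_compact.isBounded).div_const 2).cexp
end
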